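/- arXiv:2004.07978 — 3 statements merged into one kernel-verified Lean document; each statement's English description precedes it below -/
import Mathlib

section
/- In one space dimension, if u* is a positive solution of d u'' + u(m − u) = 0 on (0,L) with Neumann conditions u'(0) = u'(L) = 0, where m is continuous and positive, then ∫_0^L u* dx ≤ 3 ∫_0^L m dx. -/
/-!
Dividing the equation by `u` and integrating, the Neumann conditions kill the boundary term of
`(u'/u)' = u''/u - (u'/u)²`, so `(∫ u - ∫ m) / d = ∫ (u'/u)²`. The first integral
`3 d u'² - 2 u³` has derivative `-6 u u' m`, so its maximum is taken where `u' = 0` and is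
therefore negative; hence `(u'/u)² ≤ 2u / (3d)` pointwise, giving
`∫ u - ∫ m ≤ (2/3) ∫ u`.
-/

open Set intervalIntegral

section

variable {u m : ℝ → ℝ} {a b d : ℝ}

theorem hasDerivAt_deriv_div_self (hu : ContDiff ℝ 2 u) {x : ℝ} (hx : u x ≠ 0) :
    HasDerivAt (fun y => deriv u y / u y) (deriv (deriv u) x / u x - (deriv u x / u x) ^ 2) x :=
  ((hu.deriv' (n := 1)).differentiable one_ne_zero x).hasDerivAt.div
    ((hu.differentiable two_ne_zero x).hasDerivAt) hx |>.congr_deriv (by field_simp)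

theorem integral_sq_deriv_div_self (hu : ContDiff ℝ 2 u) (hu0 : ∀ x ∈ uIcc a b, u x ≠ 0)
    (ha : deriv u a = 0) (hb : deriv u b = 0) :
    ∫ x in a..b, (deriv u x / u x) ^ 2 = ∫ x in a..b, deriv (deriv u) x / u x := by
  have hcont : ContinuousOn (fun x => (deriv u x / u x) ^ 2) (uIcc a b) :=
    ((hu.continuous_deriv one_le_two).continuousOn.div hu.continuous.continuousOn hu0).pow 2
  have hcont' : ContinuousOn (fun x => deriv (deriv u) x / u x) (uIcc a b) :=
    ((hu.deriv' (n := 1)).continuous_deriv le_rfl).continuousOn.div hu.continuous.continuousOn hu0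
  have hftc : ∫ x in a..b, (deriv (deriv u) x / u x - (deriv u x / u x) ^ 2) = 0 := by
    rw [integral_eq_sub_of_hasDerivAt (fun x hx => hasDerivAt_deriv_div_self hu (hu0 x hx))
      (hcont'.sub hcont).intervalIntegrable, ha, hb, zero_div, zero_div, sub_zero]
  rw [integral_sub hcont'.intervalIntegrable hcont.intervalIntegrable] at hftc
  linarith

theorem integral_sq_deriv_div_self_of_ode (hu : ContDiff ℝ 2 u) (hm : ContinuousOn m (Icc a b))
    (hab : a ≤ b) (hd : d ≠ 0) (hu0 : ∀ x ∈ Icc a b, u x ≠ 0)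
    (heq : ∀ x ∈ Ioo a b, d * deriv (deriv u) x = u x * (u x - m x))
    (ha : deriv u a = 0) (hb : deriv u b = 0) :
    ∫ x in a..b, (deriv u x / u x) ^ 2 = ((∫ x in a..b, u x) - ∫ x in a..b, m x) / d := by
  rw [← uIcc_of_le hab] at hu0 hm
  have hode : ∫ x in a..b, deriv (deriv u) x / u x = ∫ x in a..b, (u x - m x) / d := by
    simp only [integral_of_le hab, MeasureTheory.integral_Ioc_eq_integral_Ioo]
    refine MeasureTheory.setIntegral_congr_fun measurableSet_Ioo fun x hx => ?_
    rw [div_eq_div_iff (hu0 x (Icc_subset_uIcc (Ioo_subset_Icc_self hx))) hd]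
    linear_combination heq x hx
  rw [integral_sq_deriv_div_self hu hu0 ha hb, hode, intervalIntegral.integral_div,
    intervalIntegral.integral_sub (hu.continuous.intervalIntegrable a b) hm.intervalIntegrable]

theorem hasDerivAt_energy (hu : ContDiff ℝ 2 u) (x : ℝ) :
    HasDerivAt (fun y => 3 * d * deriv u y ^ 2 - 2 * u y ^ 3)
      (6 * deriv u x * (d * deriv (deriv u) x - u x ^ 2)) x :=
  ((((hu.deriv' (n := 1)).differentiable one_ne_zero x).hasDerivAt.pow 2).const_mul (3 * d)).sub
    (((hu.differentiable two_ne_zero x).hasDerivAt.pow 3).const_mul 2) |>.congr_deriv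
      (by push_cast; ring)

/-- The maximum of `3 d u'² - 2 u³` over `[a, b]` sits at a zero of `u'`: at the ends by the
Neumann conditions, inside because the derivative there is `-6 u' u m`. -/
theorem three_mul_deriv_sq_le_two_mul_cube (hu : ContDiff ℝ 2 u)
    (heq : ∀ x ∈ Ioo a b, d * deriv (deriv u) x = u x * (u x - m x))
    (hum : ∀ x ∈ Ioo a b, u x * m x ≠ 0) (hu0 : ∀ x ∈ Icc a b, 0 ≤ u x)
    (ha : deriv u a = 0) (hb : deriv u b = 0) {x : ℝ} (hx : x ∈ Icc a b) :
    3 * d * deriv u x ^ 2 ≤ 2 * u x ^ 3 := by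
  obtain ⟨c, hc, hmax⟩ := isCompact_Icc.exists_isMaxOn ⟨x, hx⟩
    (continuous_iff_continuousAt.2 fun y =>
      (hasDerivAt_energy (d := d) hu y).continuousAt).continuousOn
  have hcrit : deriv u c = 0 := by
    rcases hc.1.eq_or_lt with rfl | hac
    · exact ha
    rcases hc.2.eq_or_lt with rfl | hcb
    · exact hb
    have hzero := (hasDerivAt_energy (d := d) hu c).deriv ▸
      (hmax.isLocalMax (Icc_mem_nhds hac hcb)).deriv_eq_zero
    rw [heq c ⟨hac, hcb⟩] at hzero
    have : deriv u c * (u c * m c) = 0 := by linear_combination -hzero / 6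
    exact (mul_eq_zero.mp this).resolve_right (hum c ⟨hac, hcb⟩)
  have hle : 3 * d * deriv u x ^ 2 - 2 * u x ^ 3 ≤ 3 * d * deriv u c ^ 2 - 2 * u c ^ 3 := hmax hx
  rw [hcrit] at hle
  nlinarith [pow_nonneg (hu0 c hc) 3]

end

theorem stmt_1 (d L : ℝ) (hd : 0 < d) (hL : 0 < L)
    (m u : ℝ → ℝ)
    (hm : ContinuousOn m (Icc 0 L))
    (hmpos : ∀ x ∈ Icc (0:ℝ) L, 0 < m x)
    (hu : ContDiff ℝ 2 u)
    (hupos : ∀ x ∈ Icc (0:ℝ) L, 0 < u x)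
    (heq : ∀ x ∈ Ioo (0:ℝ) L, d * deriv (deriv u) x + u x * (m x - u x) = 0)
    (hbc0 : deriv u 0 = 0) (hbcL : deriv u L = 0) :
    ∫ x in (0:ℝ)..L, u x ≤ 3 * ∫ x in (0:ℝ)..L, m x := by
  have hu0 : ∀ x ∈ Icc 0 L, u x ≠ 0 := fun x hx => (hupos x hx).ne'
  have hode : ∀ x ∈ Ioo 0 L, d * deriv (deriv u) x = u x * (u x - m x) := fun x hx => by
    linarith [heq x hx]
  have hum : ∀ x ∈ Ioo 0 L, u x * m x ≠ 0 := fun x hx =>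
    (mul_pos (hupos x (Ioo_subset_Icc_self hx)) (hmpos x (Ioo_subset_Icc_self hx))).ne'
  have hpt : ∀ x ∈ Icc 0 L, (deriv u x / u x) ^ 2 ≤ 2 / (3 * d) * u x := fun x hx => by
    have hbound := three_mul_deriv_sq_le_two_mul_cube hu hode hum
      (fun y hy => (hupos y hy).le) hbc0 hbcL hx
    have hux := hupos x hx
    calc (deriv u x / u x) ^ 2 = 3 * d * deriv u x ^ 2 / (3 * d * u x ^ 2) := by field_simp
      _ ≤ 2 * u x ^ 3 / (3 * d * u x ^ 2) := by gcongr
      _ = 2 / (3 * d) * u x := by field_simp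
  have hle : ∫ x in 0..L, (deriv u x / u x) ^ 2 ≤ ∫ x in 0..L, 2 / (3 * d) * u x :=
    integral_mono_on hL.le
      (((hu.continuous_deriv one_le_two).continuousOn.div hu.continuous.continuousOn hu0).pow 2
        |>.intervalIntegrable_of_Icc hL.le)
      (hu.continuous.intervalIntegrable 0 L |>.const_mul _) hpt
  rw [integral_sq_deriv_div_self_of_ode hu hm hL.le hd.ne' hu0 hode hbc0 hbcL,
    intervalIntegral.integral_const_mul, div_le_iff₀ hd] at hle
  have hd3 : 2 / (3 * d) * (∫ x in 0..L, u x) * d = 2 / 3 * ∫ x in 0..L, u x := by field_simp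
  linarith
end

section
/- For d > 0, α > 0, r > 0 and L > 0, the principal eigenvalue λ of the problem d φ'' − α φ' + (r + λ)φ = 0 on (0,L), with boundary conditions d φ'(0) − α φ(0) = 0 and φ(L) = 0, is negative if and only if d > α²/(4r) and L > L*(d), where L*(d) = (π − arctan(√(4dr − α²)/α)) / (√(4dr − α²)/(2d)). -/
/-
Substituting ψ(x) = e^{-αx/(2d)} φ(x) turns the eigenvalue problem into ψ'' + k ψ = 0
on (0, L) with k = (4d(r + λ) − α²)/(2d)², ψ'(0) = (α/2d) ψ(0), ψ(L) = 0 and ψ > 0 on (0, L).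
If k ≤ 0 then ψ is convex with ψ'(0) ≥ 0, hence nondecreasing, which contradicts ψ(L) = 0.
If k = ω² > 0, ψ is a multiple of sin(ωx + arctan(ω/p)) with p = α/(2d), and L must be its
first zero, i.e. L = L*(d) computed with growth rate r + λ. As L* is strictly decreasing in the
growth rate on {4dr > α²}, comparing L*(r + λ) = L with L*(r) decides the sign of λ.
-/

open Set Real

/-- The set of eigenvalues of the Speirs–Gurney problem admitting a positive
eigenfunction:  d φ'' − α φ' + (r + λ) φ = 0 on (0,L), with
d φ'(0) − α φ(0) = 0 and φ(L) = 0. -/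
def SGEigen (d α r L : ℝ) : Set ℝ :=
  {lam | ∃ φ : ℝ → ℝ, ContDiff ℝ 2 φ ∧ (∀ x ∈ Ioo 0 L, 0 < φ x) ∧
    (∀ x ∈ Ioo 0 L, d * deriv (deriv φ) x - α * deriv φ x + (r + lam) * φ x = 0) ∧
    d * deriv φ 0 - α * φ 0 = 0 ∧ φ L = 0}

/-- The critical river length L*(d). -/
noncomputable def Lstar (d α r : ℝ) : ℝ :=
  (π - arctan (Real.sqrt (4 * d * r - α ^ 2) / α)) / (Real.sqrt (4 * d * r - α ^ 2) / (2 * d))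

lemma eq_of_hasDerivAt_zero_on_Ioo {f : ℝ → ℝ} {a b : ℝ} (hab : a ≤ b) (hf : Continuous f)
    (hf' : ∀ x ∈ Ioo a b, HasDerivAt f 0 x) : f b = f a := by
  rcases hab.eq_or_lt with rfl | hab
  · rfl
  obtain ⟨c, -, hc⟩ := exists_hasDerivAt_eq_slope f (fun _ => 0) hab hf.continuousOn hf'
  rw [eq_div_iff (sub_ne_zero.2 hab.ne')] at hc
  linarith

lemma nonneg_left_of_forall_Ioo_pos {f : ℝ → ℝ} {a b : ℝ} (hab : a < b) (hf : Continuous f)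
    (hpos : ∀ x ∈ Ioo a b, 0 < f x) : 0 ≤ f a :=
  (isClosed_le continuous_const hf).closure_subset_iff.2 (fun x hx => (hpos x hx).le)
    (by rw [closure_Ioo hab.ne]; exact left_mem_Icc.2 hab.le)

lemma mul_cos_add_mul_sin_eq {a b : ℝ} (ha : 0 < a) (hb : 0 < b) (θ : ℝ) :
    a * cos θ + b * sin θ = √(a ^ 2 + b ^ 2) * sin (θ + arctan (a / b)) := by
  have h : √(1 + (a / b) ^ 2) = √(a ^ 2 + b ^ 2) / b := by
    rw [show 1 + (a / b) ^ 2 = (a ^ 2 + b ^ 2) / b ^ 2 by field_simp; ring,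
      sqrt_div' _ (sq_nonneg b), sqrt_sq hb.le]
  have : 0 < √(a ^ 2 + b ^ 2) := by positivity
  rw [sin_add, cos_arctan, sin_arctan, h]
  field_simp
  ring

lemma eq_pi_of_sin_eq_zero {θ t : ℝ} (hθ : θ ∈ Ico 0 π) (hθt : θ < t) (ht : sin t = 0)
    (hne : ∀ s ∈ Ioo θ t, sin s ≠ 0) : t = π := by
  rcases lt_trichotomy t π with h | h | h
  · exact absurd ht (sin_pos_of_pos_of_lt_pi (hθ.1.trans_lt hθt) h).ne'
  · exact h
  · exact absurd sin_pi (hne π ⟨hθ.2, h⟩)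

lemma mul_eq_of_deriv_deriv_eq_neg_sq_mul {f : ℝ → ℝ} {ω L : ℝ} (hf : ContDiff ℝ 2 f)
    (hode : ∀ x ∈ Ioo 0 L, deriv (deriv f) x = -ω ^ 2 * f x) :
    ∀ x ∈ Icc 0 L, ω * f x = ω * f 0 * cos (ω * x) + deriv f 0 * sin (ω * x) := by
  have hf1 : ContDiff ℝ 1 (deriv f) := hf.iterate_deriv' 1 1
  have hf' : ∀ x, HasDerivAt f (deriv f x) x := fun x =>
    ((hf.differentiable (by norm_num)) x).hasDerivAt
  have hf'' : ∀ x, HasDerivAt (deriv f) (deriv (deriv f) x) x := fun x =>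
    ((hf1.differentiable one_ne_zero) x).hasDerivAt
  have hcos : ∀ x, HasDerivAt (fun x => cos (ω * x)) (-sin (ω * x) * ω) x := fun x => by
    simpa using ((hasDerivAt_id x).const_mul ω).cos
  have hsin : ∀ x, HasDerivAt (fun x => sin (ω * x)) (cos (ω * x) * ω) x := fun x => by
    simpa using ((hasDerivAt_id x).const_mul ω).sin
  have hf0 : Continuous f := hf.continuous
  have hf1c : Continuous (deriv f) := hf1.continuous
  -- the Wronskians of `f` with `cos (ω x)` and `sin (ω x)` are constant
  have hW₁ : ∀ x ∈ Icc 0 L,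
      f x * (ω * cos (ω * x)) - deriv f x * sin (ω * x) = f 0 * ω := fun x hx => by
    simpa using eq_of_hasDerivAt_zero_on_Ioo
      (f := fun x => f x * (ω * cos (ω * x)) - deriv f x * sin (ω * x)) hx.1 (by fun_prop)
      fun y hy => by
      refine (((hf' y).mul ((hcos y).const_mul ω)).sub ((hf'' y).mul (hsin y))).congr_deriv ?_
      rw [hode y ⟨hy.1, hy.2.trans_le hx.2⟩]
      ring
  have hW₂ : ∀ x ∈ Icc 0 L,
      f x * (ω * sin (ω * x)) + deriv f x * cos (ω * x) = deriv f 0 := fun x hx => by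
    simpa using eq_of_hasDerivAt_zero_on_Ioo
      (f := fun x => f x * (ω * sin (ω * x)) + deriv f x * cos (ω * x)) hx.1 (by fun_prop)
      fun y hy => by
      refine (((hf' y).mul ((hsin y).const_mul ω)).add ((hf'' y).mul (hcos y))).congr_deriv ?_
      rw [hode y ⟨hy.1, hy.2.trans_le hx.2⟩]
      ring
  intro x hx
  linear_combination cos (ω * x) * hW₁ x hx + sin (ω * x) * hW₂ x hx
    - ω * f x * sin_sq_add_cos_sq (ω * x)

lemma hasDerivAt_exp_neg_mul_mul {φ : ℝ → ℝ} {φ' p x : ℝ} (hφ : HasDerivAt φ φ' x) :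
    HasDerivAt (fun y => exp (-p * y) * φ y) (exp (-p * x) * (φ' - p * φ x)) x := by
  have he : HasDerivAt (fun y => exp (-p * y)) (exp (-p * x) * -p) x := by
    simpa using ((hasDerivAt_id x).const_mul (-p)).exp
  exact (he.mul hφ).congr_deriv (by ring)

lemma deriv_deriv_exp_neg_mul_mul {φ : ℝ → ℝ} (hφ : ContDiff ℝ 2 φ) (p x : ℝ) :
    deriv (deriv fun y => exp (-p * y) * φ y) x =
      exp (-p * x) * (deriv (deriv φ) x - 2 * p * deriv φ x + p ^ 2 * φ x) := by
  have hφ1 : Differentiable ℝ φ := hφ.differentiable (by norm_num)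
  have hφ2 : Differentiable ℝ (deriv φ) := (hφ.iterate_deriv' 1 1).differentiable one_ne_zero
  have hderiv :
      (deriv fun y => exp (-p * y) * φ y) = fun y => exp (-p * y) * (deriv φ y - p * φ y) :=
    funext fun y => (hasDerivAt_exp_neg_mul_mul (hφ1 y).hasDerivAt).deriv
  rw [hderiv, (hasDerivAt_exp_neg_mul_mul (φ := fun y => deriv φ y - p * φ y)
    ((hφ2 x).hasDerivAt.sub ((hφ1 x).hasDerivAt.const_mul p))).deriv]
  ring

structure IsRobinDirichletEigenfunction (k p L : ℝ) (ψ : ℝ → ℝ) : Prop where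
  contDiff : ContDiff ℝ 2 ψ
  pos : ∀ x ∈ Ioo 0 L, 0 < ψ x
  ode : ∀ x ∈ Ioo 0 L, deriv (deriv ψ) x = -k * ψ x
  robin : deriv ψ 0 = p * ψ 0
  dirichlet : ψ L = 0

namespace IsRobinDirichletEigenfunction

variable {k p L : ℝ} {ψ : ℝ → ℝ}

theorem eigenvalue_pos (h : IsRobinDirichletEigenfunction k p L ψ) (hp : 0 ≤ p) (hL : 0 < L) :
    0 < k := by
  by_contra! hk
  have hψ1 : ContDiff ℝ 1 (deriv ψ) := h.contDiff.iterate_deriv' 1 1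
  have hψ0 : 0 ≤ ψ 0 := nonneg_left_of_forall_Ioo_pos hL h.contDiff.continuous h.pos
  have hmono' : MonotoneOn (deriv ψ) (Icc 0 L) := by
    refine monotoneOn_of_deriv_nonneg (convex_Icc 0 L) hψ1.continuous.continuousOn
      (hψ1.differentiable one_ne_zero).differentiableOn fun x hx => ?_
    rw [interior_Icc] at hx
    rw [h.ode x hx]
    nlinarith [h.pos x hx]
  have hmono : MonotoneOn ψ (Icc 0 L) := by
    refine monotoneOn_of_deriv_nonneg (convex_Icc 0 L) h.contDiff.continuous.continuousOn
      (h.contDiff.differentiable (by norm_num)).differentiableOn fun x hx => ?_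
    rw [interior_Icc] at hx
    have := hmono' (left_mem_Icc.2 hL.le) (Ioo_subset_Icc_self hx) hx.1.le
    rw [h.robin] at this
    nlinarith [mul_nonneg hp hψ0]
  have hmid : L / 2 ∈ Ioo 0 L := ⟨by linarith, by linarith⟩
  have := hmono (Ioo_subset_Icc_self hmid) (right_mem_Icc.2 hL.le) (by linarith)
  rw [h.dirichlet] at this
  exact (h.pos _ hmid).not_ge this

theorem sqrt_eigenvalue_mul_eq (h : IsRobinDirichletEigenfunction k p L ψ) (hp : 0 < p)
    (hL : 0 < L) : √k * L = π - arctan (√k / p) := by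
  have hk := h.eigenvalue_pos hp.le hL
  set ω := √k
  have hω : 0 < ω := sqrt_pos.2 hk
  set δ := arctan (ω / p)
  have hδ : δ ∈ Ioo 0 (π / 2) := ⟨arctan_pos.2 (by positivity), arctan_lt_pi_div_two _⟩
  have hform : ∀ x ∈ Icc 0 L, ω * ψ x = ψ 0 * √(ω ^ 2 + p ^ 2) * sin (ω * x + δ) := by
    intro x hx
    have hode : ∀ y ∈ Ioo 0 L, deriv (deriv ψ) y = -ω ^ 2 * ψ y := fun y hy => by
      rw [h.ode y hy, sq_sqrt hk.le]
    rw [mul_assoc, ← mul_cos_add_mul_sin_eq hω hp,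
      mul_eq_of_deriv_deriv_eq_neg_sq_mul h.contDiff hode x hx, h.robin]
    ring
  have hψ0 : ψ 0 ≠ 0 := by
    intro h0
    have hmid : L / 2 ∈ Ioo 0 L := ⟨by linarith, by linarith⟩
    have := hform (L / 2) (Ioo_subset_Icc_self hmid)
    rw [h0, zero_mul, zero_mul] at this
    exact (mul_pos hω (h.pos _ hmid)).ne' this
  have hsinL : sin (ω * L + δ) = 0 := by
    have := hform L (right_mem_Icc.2 hL.le)
    rw [h.dirichlet, mul_zero] at this
    exact (mul_eq_zero.1 this.symm).resolve_left (mul_ne_zero hψ0 (by positivity))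
  have hsin_ne : ∀ s ∈ Ioo δ (ω * L + δ), sin s ≠ 0 := by
    intro s hs hsin
    have hx : (s - δ) / ω ∈ Ioo 0 L :=
      ⟨div_pos (by linarith [hs.1]) hω, by rw [div_lt_iff₀ hω]; linarith [hs.2]⟩
    have := hform _ (Ioo_subset_Icc_self hx)
    rw [mul_div_cancel₀ _ hω.ne', sub_add_cancel, hsin, mul_zero] at this
    exact (mul_pos hω (h.pos _ hx)).ne' this
  have := eq_pi_of_sin_eq_zero ⟨hδ.1.le, hδ.2.trans (half_lt_self pi_pos)⟩
    (by linarith [mul_pos hω hL]) hsinL hsin_ne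
  linarith

end IsRobinDirichletEigenfunction

section SpeirsGurney

variable {d α r L lam : ℝ}

theorem exists_isRobinDirichletEigenfunction_of_mem_SGEigen (hd : 0 < d)
    (h : lam ∈ SGEigen d α r L) : ∃ ψ, IsRobinDirichletEigenfunction
      ((4 * d * (r + lam) - α ^ 2) / (2 * d) ^ 2) (α / (2 * d)) L ψ := by
  obtain ⟨φ, hφ, hpos, hode, hrobin, hdir⟩ := h
  have hφ1 : Differentiable ℝ φ := hφ.differentiable (by norm_num)
  refine ⟨fun y => exp (-(α / (2 * d)) * y) * φ y, ⟨by fun_prop, fun x hx => by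
    positivity [hpos x hx], fun x hx => ?_, ?_, by simp [hdir]⟩⟩
  · have hφ'' : deriv (deriv φ) x = (α * deriv φ x - (r + lam) * φ x) / d := by
      rw [eq_div_iff hd.ne']
      linarith [hode x hx]
    rw [deriv_deriv_exp_neg_mul_mul hφ, hφ'']
    field_simp
    ring
  · have hφ' : deriv φ 0 = α * φ 0 / d := by
      rw [eq_div_iff hd.ne']
      linarith
    rw [(hasDerivAt_exp_neg_mul_mul (hφ1 0).hasDerivAt).deriv, hφ']
    field_simp
    ring

theorem lt_and_eq_Lstar_of_mem_SGEigen (hd : 0 < d) (hα : 0 < α) (hL : 0 < L)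
    (h : lam ∈ SGEigen d α r L) : α ^ 2 < 4 * d * (r + lam) ∧ L = Lstar d α (r + lam) := by
  obtain ⟨ψ, hψ⟩ := exists_isRobinDirichletEigenfunction_of_mem_SGEigen hd h
  generalize hS_def : 4 * d * (r + lam) - α ^ 2 = S at hψ
  have hS : 0 < S :=
    (div_pos_iff_of_pos_right (by positivity)).1 (hψ.eigenvalue_pos (by positivity) hL)
  have hphase := hψ.sqrt_eigenvalue_mul_eq (by positivity) hL
  rw [sqrt_div' _ (by positivity), sqrt_sq (by positivity),
    show √S / (2 * d) / (α / (2 * d)) = √S / α by field_simp] at hphase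
  refine ⟨by linarith, ?_⟩
  rw [Lstar, hS_def, ← hphase]
  field_simp

end SpeirsGurney

theorem Lstar_strictAntiOn {d α : ℝ} (hd : 0 < d) (hα : 0 < α) :
    StrictAntiOn (Lstar d α) {r | α ^ 2 < 4 * d * r} := by
  intro r₁ h₁ r₂ _ hr
  have hS₁ : 0 < √(4 * d * r₁ - α ^ 2) := sqrt_pos.2 (by linarith [h₁.out])
  have hS : √(4 * d * r₁ - α ^ 2) < √(4 * d * r₂ - α ^ 2) :=
    sqrt_lt_sqrt (by linarith [h₁.out]) (by nlinarith)
  refine div_lt_div₀ ?_ (by gcongr) ?_ (by positivity)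
  · linarith [arctan_strictMono (div_lt_div_of_pos_right hS hα)]
  · linarith [arctan_lt_pi_div_two (√(4 * d * r₁ - α ^ 2) / α), pi_pos]

theorem stmt_2 (d α r L : ℝ) (hd : 0 < d) (hα : 0 < α) (hr : 0 < r) (hL : 0 < L)
    (lam : ℝ) (hlam : IsLeast (SGEigen d α r L) lam) :
    lam < 0 ↔ (d > α ^ 2 / (4 * r) ∧ L > Lstar d α r) := by
  obtain ⟨hcrit_lam, hLeq⟩ := lt_and_eq_Lstar_of_mem_SGEigen hd hα hL hlam.1
  have hcrit : d > α ^ 2 / (4 * r) ↔ α ^ 2 < 4 * d * r := by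
    rw [gt_iff_lt, div_lt_iff₀ (by positivity)]
    ring_nf
  rw [hcrit, hLeq]
  constructor
  · intro hneg
    have hcrit_r : α ^ 2 < 4 * d * r := by nlinarith
    exact ⟨hcrit_r, Lstar_strictAntiOn hd hα hcrit_lam hcrit_r (by linarith)⟩
  · rintro ⟨hcrit_r, hlt⟩
    by_contra! hlam0
    exact ((Lstar_strictAntiOn hd hα).antitoneOn hcrit_r hcrit_lam (by linarith)).not_gt hlt
end

section
/- For positive constants b₁, b₂, c₁ ≠ c₂ and α > 0, the pair (u₁, u₂) with u₁(x) = b₁ e^{c₁x}, u₂(x) = b₂ e^{c₂x} is a positive solution of the system ξ₁ u₁'' − α u₁' + u₁(r − u₁ − u₂) = 0, ξ₂ u₂'' − α u₂' + u₂(r − u₁ − u₂) = 0 on (0,L), with no-flux conditions ξᵢ uᵢ'(x) − α uᵢ(x) = 0 at x = 0, L, where r(x) = b₁ e^{c₁x} + b₂ e^{c₂x}, ξ₁ = α/c₁ and ξ₂ = α/c₂. -/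
open Set Real

lemma deriv_bexp (b c : ℝ) :
    deriv (fun x => b * exp (c * x)) = fun x => b * c * exp (c * x) := by
  funext x
  have h : HasDerivAt (fun x => b * exp (c * x)) (b * c * exp (c * x)) x := by
    have := (hasDerivAt_id x).const_mul c
    have h2 := (this.exp).const_mul b
    simpa [mul_comm, mul_assoc, mul_left_comm] using h2
  exact h.deriv

theorem stmt_8 (b₁ b₂ c₁ c₂ α L : ℝ) (hb₁ : 0 < b₁) (hb₂ : 0 < b₂)
    (hc₁ : 0 < c₁) (hc₂ : 0 < c₂) (hcne : c₁ ≠ c₂) (hα : 0 < α) (hL : 0 < L)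
    (u₁ u₂ r : ℝ → ℝ)
    (hu₁ : u₁ = fun x => b₁ * exp (c₁ * x))
    (hu₂ : u₂ = fun x => b₂ * exp (c₂ * x))
    (hr : r = fun x => b₁ * exp (c₁ * x) + b₂ * exp (c₂ * x))
    (ξ₁ ξ₂ : ℝ) (hξ₁ : ξ₁ = α / c₁) (hξ₂ : ξ₂ = α / c₂) :
    (∀ x, 0 < u₁ x ∧ 0 < u₂ x) ∧
    (∀ x ∈ Ioo (0:ℝ) L,
      ξ₁ * deriv (deriv u₁) x - α * deriv u₁ x + u₁ x * (r x - u₁ x - u₂ x) = 0) ∧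
    (∀ x ∈ Ioo (0:ℝ) L,
      ξ₂ * deriv (deriv u₂) x - α * deriv u₂ x + u₂ x * (r x - u₁ x - u₂ x) = 0) ∧
    (ξ₁ * deriv u₁ 0 - α * u₁ 0 = 0 ∧ ξ₁ * deriv u₁ L - α * u₁ L = 0) ∧
    (ξ₂ * deriv u₂ 0 - α * u₂ 0 = 0 ∧ ξ₂ * deriv u₂ L - α * u₂ L = 0) := by
  subst hu₁ hu₂ hr hξ₁ hξ₂
  have d1 : deriv (fun x => b₁ * exp (c₁ * x)) = fun x => b₁ * c₁ * exp (c₁ * x) :=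
    deriv_bexp b₁ c₁
  have d2 : deriv (fun x => b₂ * exp (c₂ * x)) = fun x => b₂ * c₂ * exp (c₂ * x) :=
    deriv_bexp b₂ c₂
  have dd1 : deriv (fun x => b₁ * c₁ * exp (c₁ * x)) = fun x => b₁ * c₁ * c₁ * exp (c₁ * x) := by
    simpa [mul_assoc] using deriv_bexp (b₁ * c₁) c₁
  have dd2 : deriv (fun x => b₂ * c₂ * exp (c₂ * x)) = fun x => b₂ * c₂ * c₂ * exp (c₂ * x) := by
    simpa [mul_assoc] using deriv_bexp (b₂ * c₂) c₂
  have hc₁' := hc₁.ne'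
  have hc₂' := hc₂.ne'
  refine ⟨fun x => ⟨by positivity, by positivity⟩, ?_, ?_, ?_, ?_⟩ <;>
    simp only [d1, d2, dd1, dd2] <;>
    first
    | (intro x _; field_simp; ring)
    | (constructor <;> (field_simp; ring))
end
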